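/- arXiv:1810.08823 — 3 statements merged into one kernel-verified Lean document; each statement's English description precedes it below -/
import Mathlib

section
/- For all r in [0,1) and all b in (-1,1), with a = tan(bπ/4), the inequality (4/π)·arctan((a+r)/(1+ar)) ≤ ((1-r²)/(1+r²))·b + (4/π)·arctan(r) holds. -/
/-!
Write `a = tan (b π / 4)`, so that `b = (4 / π) arctan a`, and multiply through by `π / 4`.
With `c = (1 - r²) / (1 + r²)` the claim becomes `g 0 ≤ g a` for
`g t = c arctan t + arctan r - arctan ((t + r) / (1 + t r))`, and `g 0 = 0`.
Since `(1 + t r)² + (t + r)² = (1 + t²)(1 + r²) + 4 t r`, the derivative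
`g' t = c / (1 + t²) - (1 - r²) / ((1 + t r)² + (t + r)²)` has the sign of `t`,
so `g` attains its minimum at `0`.
-/

open Real Set

lemma le_of_hasDerivAt_of_mul_deriv_nonneg {f f' : ℝ → ℝ} {a : ℝ}
    (hf : ∀ x ∈ uIcc 0 a, HasDerivAt f (f' x) x) (hsign : ∀ x ∈ uIcc 0 a, 0 ≤ x * f' x) :
    f 0 ≤ f a := by
  have hcont : ContinuousOn f (uIcc 0 a) := fun x hx => (hf x hx).continuousAt.continuousWithinAt
  rcases le_total 0 a with ha | ha
  · rw [uIcc_of_le ha] at hf hsign hcont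
    refine monotoneOn_of_hasDerivWithinAt_nonneg (convex_Icc 0 a) hcont
      (fun x hx => (hf x (interior_subset hx)).hasDerivWithinAt) (fun x hx => ?_)
      (left_mem_Icc.2 ha) (right_mem_Icc.2 ha) ha
    rw [interior_Icc] at hx
    exact nonneg_of_mul_nonneg_right (hsign x (Ioo_subset_Icc_self hx)) hx.1
  · rw [uIcc_of_ge ha] at hf hsign hcont
    refine antitoneOn_of_hasDerivWithinAt_nonpos (convex_Icc a 0) hcont
      (fun x hx => (hf x (interior_subset hx)).hasDerivWithinAt) (fun x hx => ?_)
      (left_mem_Icc.2 ha) (right_mem_Icc.2 ha) ha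
    rw [interior_Icc] at hx
    exact nonpos_of_mul_nonneg_right (hsign x (Ioo_subset_Icc_self hx)) hx.2

lemma hasDerivAt_arctan_add_div_one_add_mul {r t : ℝ} (h : 0 < 1 + t * r) :
    HasDerivAt (fun t => arctan ((t + r) / (1 + t * r)))
      ((1 - r ^ 2) / ((1 + t * r) ^ 2 + (t + r) ^ 2)) t := by
  have hQ : (1 + t * r) ^ 2 + (t + r) ^ 2 ≠ 0 := by positivity
  refine (((hasDerivAt_id t).add_const r).div
    (((hasDerivAt_id t).mul_const r).const_add 1) h.ne').arctan.congr_deriv ?_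
  simp only [Pi.div_apply, id]
  field_simp
  ring

lemma arctan_add_div_one_add_mul_le {a r : ℝ} (hr0 : 0 ≤ r) (hr1 : r ≤ 1)
    (ha : 0 < 1 + a * r) :
    arctan ((a + r) / (1 + a * r)) ≤ (1 - r ^ 2) / (1 + r ^ 2) * arctan a + arctan r := by
  set c := (1 - r ^ 2) / (1 + r ^ 2)
  let g t := c * arctan t + arctan r - arctan ((t + r) / (1 + t * r))
  let g' t := c / (1 + t ^ 2) - (1 - r ^ 2) / ((1 + t * r) ^ 2 + (t + r) ^ 2)
  have hpos : ∀ x ∈ uIcc 0 a, 0 < 1 + x * r := by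
    intro x hx
    rcases mem_uIcc.1 hx with ⟨hx0, -⟩ | ⟨hax, -⟩ <;> nlinarith
  have hderiv : ∀ x ∈ uIcc 0 a, HasDerivAt g (g' x) x := fun x hx =>
    (((hasDerivAt_arctan x).const_mul c).add_const _).sub
      (hasDerivAt_arctan_add_div_one_add_mul (hpos x hx)) |>.congr_deriv (by simp only [g']; ring)
  have hsign : ∀ x ∈ uIcc 0 a, 0 ≤ x * g' x := by
    intro x hx
    have hQ : 0 < (1 + x * r) ^ 2 + (x + r) ^ 2 := by nlinarith [hpos x hx]
    have hform : x * g' x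
        = (1 - r ^ 2) * (4 * r * x ^ 2) /
            ((1 + r ^ 2) * (1 + x ^ 2) * ((1 + x * r) ^ 2 + (x + r) ^ 2)) := by
      simp only [g', c]
      field_simp
      ring
    rw [hform]
    exact div_nonneg (mul_nonneg (by nlinarith) (by positivity)) (by positivity)
  have hmin := le_of_hasDerivAt_of_mul_deriv_nonneg hderiv hsign
  simp only [g, arctan_zero, mul_zero, zero_add, zero_mul, add_zero, div_one, sub_self] at hmin
  linarith

/-- For all r in [0,1) and all b in (-1,1), with a = tan(bπ/4),
(4/π)·arctan((a+r)/(1+ar)) ≤ ((1-r²)/(1+r²))·b + (4/π)·arctan(r). -/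
theorem Mb_le_Ab (r b a : ℝ) (hr0 : 0 ≤ r) (hr1 : r < 1)
    (hb0 : -1 < b) (hb1 : b < 1) (ha : a = Real.tan (b * Real.pi / 4)) :
    (4 / Real.pi) * Real.arctan ((a + r) / (1 + a * r)) ≤
      ((1 - r ^ 2) / (1 + r ^ 2)) * b + (4 / Real.pi) * Real.arctan r := by
  have harctan : arctan a = b * π / 4 := by
    rw [ha]
    exact arctan_tan (by nlinarith [pi_pos]) (by nlinarith [pi_pos])
  have ha1 : -1 < a := by
    rw [← arctan_strictMono.lt_iff_lt, arctan_neg, arctan_one, harctan]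
    nlinarith [pi_pos]
  calc 4 / π * arctan ((a + r) / (1 + a * r))
      ≤ 4 / π * ((1 - r ^ 2) / (1 + r ^ 2) * arctan a + arctan r) :=
        mul_le_mul_of_nonneg_left (arctan_add_div_one_add_mul_le hr0 hr1.le (by nlinarith))
          (by positivity)
    _ = (1 - r ^ 2) / (1 + r ^ 2) * b + 4 / π * arctan r := by rw [harctan]; field_simp
end

section
/- Fix r ∈ (0,1) and define φ(a) = arctan(a(1-r²)/(r²+2ar+1)) - ((1-r²)/(1+r²))·arctan(a) for a ∈ (-1,1). Then φ(a) ≤ 0 for all a ∈ [0,1) (equivalently, φ attains its maximum value 0 at a = 0). -/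
/-!
Because `(r² + 2ar + 1)² + a²(1 - r²)² = (1 + r²)((1 + r²)(1 + a²) + 4ar)`, the derivative of `φ`
simplifies to `(1 - r²) / ((1 + r²)(1 + a²) + 4ar) - (1 - r²) / ((1 + r²)(1 + a²))`, which is `≤ 0`
for `a, r ≥ 0` and `r ≤ 1`. So `φ` decreases on `[0, ∞)` from `φ 0 = 0`.
-/

open Real Set

noncomputable def phi (r a : ℝ) : ℝ :=
  arctan (a * (1 - r ^ 2) / (r ^ 2 + 2 * a * r + 1)) - ((1 - r ^ 2) / (1 + r ^ 2)) * arctan a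

noncomputable def phiDeriv (r x : ℝ) : ℝ :=
  (1 - r ^ 2) / ((1 + r ^ 2) * (1 + x ^ 2) + 4 * x * r) - (1 - r ^ 2) / ((1 + r ^ 2) * (1 + x ^ 2))

theorem phi_zero (r : ℝ) : phi r 0 = 0 := by
  simp [phi]

theorem hasDerivAt_arctan_div {r x : ℝ} (hx : r ^ 2 + 2 * x * r + 1 ≠ 0) :
    HasDerivAt (fun a => arctan (a * (1 - r ^ 2) / (r ^ 2 + 2 * a * r + 1)))
      ((1 - r ^ 2) / ((1 + r ^ 2) * (1 + x ^ 2) + 4 * x * r)) x := by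
  set q := r ^ 2 + 2 * x * r + 1
  set K := (1 + r ^ 2) * (1 + x ^ 2) + 4 * x * r
  have hnum : HasDerivAt (fun a : ℝ => a * (1 - r ^ 2)) (1 * (1 - r ^ 2)) x :=
    (hasDerivAt_id x).mul_const _
  have hden : HasDerivAt (fun a : ℝ => r ^ 2 + 2 * a * r + 1) (2 * 1 * r) x :=
    ((((hasDerivAt_id x).const_mul 2).mul_const r).const_add _).add_const _
  have hsum_sq : (1 + r ^ 2) * K = q ^ 2 + (x * (1 - r ^ 2)) ^ 2 := by ring
  have hK : 0 < K := by
    have : 0 < (1 + r ^ 2) * K := hsum_sq ▸ by positivity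
    exact pos_of_mul_pos_right this (by positivity)
  have hq2 : q ^ 2 ≠ 0 := pow_ne_zero 2 hx
  have hkey : 1 + (x * (1 - r ^ 2) / q) ^ 2 = (1 + r ^ 2) * K / q ^ 2 := by
    rw [hsum_sq, eq_div_iff hq2, add_mul, div_pow, div_mul_cancel₀ _ hq2]
    ring
  refine ((hnum.div hden hx).arctan).congr_deriv ?_
  simp only [Pi.div_apply]
  rw [hkey, one_div_div, div_mul_div_comm, div_eq_div_iff (by positivity) hK.ne']
  ring

theorem hasDerivAt_phi {r x : ℝ} (hx : r ^ 2 + 2 * x * r + 1 ≠ 0) :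
    HasDerivAt (phi r) (phiDeriv r x) x := by
  refine ((hasDerivAt_arctan_div hx).sub ((hasDerivAt_arctan x).const_mul _)).congr_deriv ?_
  rw [phiDeriv]
  field_simp

theorem phiDeriv_nonpos {r x : ℝ} (hr0 : 0 ≤ r) (hr1 : r ≤ 1) (hx : 0 ≤ x) : phiDeriv r x ≤ 0 := by
  rw [phiDeriv, sub_nonpos]
  exact div_le_div_of_nonneg_left (by nlinarith) (by positivity) (by nlinarith [mul_nonneg hx hr0])

theorem antitoneOn_phi {r : ℝ} (hr0 : 0 ≤ r) (hr1 : r ≤ 1) : AntitoneOn (phi r) (Ici 0) := by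
  have hderiv : ∀ x ∈ Ici (0 : ℝ), HasDerivAt (phi r) (phiDeriv r x) x := fun x hx =>
    hasDerivAt_phi (by nlinarith [mul_nonneg (mem_Ici.mp hx) hr0])
  exact antitoneOn_of_hasDerivWithinAt_nonpos (convex_Ici 0)
    (fun x hx => (hderiv x hx).continuousAt.continuousWithinAt)
    (fun x hx => (hderiv x (interior_subset hx)).hasDerivWithinAt)
    fun x hx => phiDeriv_nonpos hr0 hr1 (interior_subset hx : x ∈ Ici 0)

theorem phi_nonpos_general (r : ℝ) (hr0 : 0 < r) (hr1 : r < 1) (a : ℝ) (ha0 : 0 ≤ a) :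
    Real.arctan (a * (1 - r ^ 2) / (r ^ 2 + 2 * a * r + 1)) -
      ((1 - r ^ 2) / (1 + r ^ 2)) * Real.arctan a ≤ 0 := by
  have h := antitoneOn_phi hr0.le hr1.le (mem_Ici.mpr le_rfl) (mem_Ici.mpr ha0) ha0
  rwa [phi_zero] at h

/-- for fixed r ∈ (0,1), φ(a) = arctan(a(1-r²)/(r²+2ar+1)) -
((1-r²)/(1+r²))·arctan(a) satisfies φ(a) ≤ 0 for a ∈ [0,1). -/
theorem phi_nonpos (r : ℝ) (hr0 : 0 < r) (hr1 : r < 1) (a : ℝ) (ha0 : 0 ≤ a) (ha1 : a < 1) :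
    Real.arctan (a * (1 - r ^ 2) / (r ^ 2 + 2 * a * r + 1)) -
      ((1 - r ^ 2) / (1 + r ^ 2)) * Real.arctan a ≤ 0 :=
  phi_nonpos_general r hr0 hr1 a ha0
end

section
/- Let b ∈ (0,1). The function A_b(r) = ((1-r²)/(1+r²))·b + (4/π)·arctan(r) satisfies A_b(0) = b and A_b(1) = 1; moreover, if b > 2/π then there exists a unique r₀ ∈ (0,1) with A_b(r₀) = 1, and max over r ∈ [0,1] of A_b(r) > 1. -/
/-!
`A_b` has derivative `4 (1 + r² - π b r) / (π (1 + r²)²)`. When `π b > 2` the quadratic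
`1 + r² - π b r` has a root `r₁ ∈ (0, 1)` (its roots have product `1`), so `A_b` increases on
`[0, r₁]` and decreases on `[r₁, 1]`. Since `A_b 1 = 1`, the peak value `A_b r₁` exceeds `1` and
the level `1` is not attained on `(r₁, 1)`; on `[0, r₁]` it is attained exactly once, by the
intermediate value theorem and strict monotonicity, because `A_b 0 = b < 1`.
-/

open Real Set

theorem lt_of_strictAntiOn_Icc_of_eq {α δ : Type*} [Preorder α] [Preorder δ] {f : α → δ}
    {m c : α} {y : δ} (hmc : m < c) (hanti : StrictAntiOn f (Icc m c)) (hc : f c = y) : y < f m :=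
  hc ▸ hanti (left_mem_Icc.2 hmc.le) (right_mem_Icc.2 hmc.le) hmc

theorem existsUnique_mem_Ioo_eq_of_unimodal {α δ : Type*} [ConditionallyCompleteLinearOrder α]
    [DenselyOrdered α] [TopologicalSpace α] [OrderTopology α] [LinearOrder δ] [TopologicalSpace δ]
    [OrderClosedTopology δ] {f : α → δ} {a m c : α} {y : δ} (ham : a < m)
    (hmc : m < c) (hcont : ContinuousOn f (Icc a m)) (hmono : StrictMonoOn f (Icc a m))
    (hanti : StrictAntiOn f (Icc m c)) (ha : f a < y) (hc : f c = y) :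
    ∃! x, x ∈ Ioo a c ∧ f x = y := by
  have hpeak : y < f m := lt_of_strictAntiOn_Icc_of_eq hmc hanti hc
  obtain ⟨x, ⟨hax, hxm⟩, hx⟩ := intermediate_value_Ioo ham.le hcont ⟨ha, hpeak⟩
  refine ⟨x, ⟨⟨hax, hxm.trans hmc⟩, hx⟩, fun z ⟨⟨haz, hzc⟩, hz⟩ => ?_⟩
  rcases le_or_gt z m with hzm | hmz
  · exact hmono.injOn ⟨haz.le, hzm⟩ ⟨hax.le, hxm.le⟩ (hz.trans hx.symm)
  · have := hanti ⟨hmz.le, hzc.le⟩ ⟨hmc.le, le_rfl⟩ hzc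
    rw [hz, hc] at this
    exact (lt_irrefl y this).elim

theorem exists_root_one_add_sq_sub_mul {c : ℝ} (hc : 2 < c) :
    ∃ r₁ ∈ Ioo (0 : ℝ) 1, (∀ r < r₁, 0 < 1 + r ^ 2 - c * r) ∧
      ∀ r ∈ Ioo r₁ 1, 1 + r ^ 2 - c * r < 0 := by
  set d := √(c ^ 2 - 4)
  have hd : d ^ 2 = c ^ 2 - 4 := sq_sqrt (by nlinarith)
  have hd0 : 0 ≤ d := sqrt_nonneg _
  have hdc : d < c := by nlinarith
  have hcd : c - 2 < d := by nlinarith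
  have hfactor : ∀ r, 1 + r ^ 2 - c * r = ((c - d) / 2 - r) * ((c + d) / 2 - r) := fun r => by
    linear_combination hd / 4
  refine ⟨(c - d) / 2, ⟨by linarith, by linarith⟩, fun r hr => ?_, fun r hr => ?_⟩
  · rw [hfactor]
    exact mul_pos (by linarith) (by linarith)
  · rw [hfactor]
    exact mul_neg_of_neg_of_pos (by linarith [hr.1]) (by linarith [hr.2])

noncomputable def A (b r : ℝ) : ℝ := (1 - r ^ 2) / (1 + r ^ 2) * b + 4 / π * arctan r

theorem A_zero (b : ℝ) : A b 0 = b := by simp [A]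

theorem A_one (b : ℝ) : A b 1 = 1 := by
  simp only [A, arctan_one]
  field_simp
  ring

theorem hasDerivAt_A (b r : ℝ) :
    HasDerivAt (A b) (4 * (1 + r ^ 2 - π * b * r) / (π * (1 + r ^ 2) ^ 2)) r := by
  have hden : 1 + r ^ 2 ≠ 0 := by positivity
  have hquot :
      HasDerivAt (fun x : ℝ => (1 - x ^ 2) / (1 + x ^ 2)) (-4 * r / (1 + r ^ 2) ^ 2) r := by
    refine (((hasDerivAt_pow 2 r).const_sub 1).div
      ((hasDerivAt_pow 2 r).const_add 1) hden).congr_deriv ?_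
    field_simp
    ring
  refine ((hquot.mul_const b).add ((hasDerivAt_arctan r).const_mul (4 / π))).congr_deriv ?_
  field_simp
  ring

theorem continuous_A (b : ℝ) : Continuous (A b) :=
  continuous_iff_continuousAt.2 fun r => (hasDerivAt_A b r).continuousAt

theorem deriv_A_pos {b r : ℝ} (hr : 0 < 1 + r ^ 2 - π * b * r) : 0 < deriv (A b) r := by
  rw [(hasDerivAt_A b r).deriv]
  positivity

theorem deriv_A_neg {b r : ℝ} (hr : 1 + r ^ 2 - π * b * r < 0) : deriv (A b) r < 0 := by
  rw [(hasDerivAt_A b r).deriv]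
  exact div_neg_of_neg_of_pos (by linarith) (by positivity)

theorem Ab_properties_general (b : ℝ) (hb1 : b < 1) :
    (fun r : ℝ => ((1 - r ^ 2) / (1 + r ^ 2)) * b + (4 / Real.pi) * Real.arctan r) 0 = b ∧
    (fun r : ℝ => ((1 - r ^ 2) / (1 + r ^ 2)) * b + (4 / Real.pi) * Real.arctan r) 1 = 1 ∧
    (b > 2 / Real.pi →
      (∃! r₀ : ℝ, r₀ ∈ Ioo (0 : ℝ) 1 ∧
        ((1 - r₀ ^ 2) / (1 + r₀ ^ 2)) * b + (4 / Real.pi) * Real.arctan r₀ = 1) ∧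
      (∃ r ∈ Icc (0 : ℝ) 1,
        ((1 - r ^ 2) / (1 + r ^ 2)) * b + (4 / Real.pi) * Real.arctan r > 1)) := by
  change A b 0 = b ∧ A b 1 = 1 ∧ (b > 2 / π →
    (∃! r₀, r₀ ∈ Ioo 0 1 ∧ A b r₀ = 1) ∧ ∃ r ∈ Icc 0 1, A b r > 1)
  refine ⟨A_zero b, A_one b, fun hb => ?_⟩
  have hc : 2 < π * b := by rwa [gt_iff_lt, div_lt_iff₀' pi_pos] at hb
  obtain ⟨r₁, ⟨hr₁0, hr₁1⟩, hpos, hneg⟩ := exists_root_one_add_sq_sub_mul hc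
  have hmono : StrictMonoOn (A b) (Icc 0 r₁) :=
    strictMonoOn_of_deriv_pos (convex_Icc 0 r₁) (continuous_A b).continuousOn fun r hr =>
      deriv_A_pos (hpos r (by rw [interior_Icc] at hr; exact hr.2))
  have hanti : StrictAntiOn (A b) (Icc r₁ 1) :=
    strictAntiOn_of_deriv_neg (convex_Icc r₁ 1) (continuous_A b).continuousOn fun r hr =>
      deriv_A_neg (hneg r (by rwa [interior_Icc] at hr))
  exact ⟨existsUnique_mem_Ioo_eq_of_unimodal hr₁0 hr₁1 (continuous_A b).continuousOn hmono
      hanti (by rwa [A_zero]) (A_one b),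
    r₁, ⟨hr₁0.le, hr₁1.le⟩, lt_of_strictAntiOn_Icc_of_eq hr₁1 hanti (A_one b)⟩

/-- for b ∈ (0,1), A_b(r) = ((1-r²)/(1+r²))·b + (4/π)·arctan r satisfies
A_b(0) = b, A_b(1) = 1, and if b > 2/π there is a unique r₀ ∈ (0,1) with A_b(r₀) = 1
and the maximum of A_b over [0,1] exceeds 1. -/
theorem Ab_properties (b : ℝ) (hb0 : 0 < b) (hb1 : b < 1) :
    (fun r : ℝ => ((1 - r ^ 2) / (1 + r ^ 2)) * b + (4 / Real.pi) * Real.arctan r) 0 = b ∧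
    (fun r : ℝ => ((1 - r ^ 2) / (1 + r ^ 2)) * b + (4 / Real.pi) * Real.arctan r) 1 = 1 ∧
    (b > 2 / Real.pi →
      (∃! r₀ : ℝ, r₀ ∈ Ioo (0 : ℝ) 1 ∧
        ((1 - r₀ ^ 2) / (1 + r₀ ^ 2)) * b + (4 / Real.pi) * Real.arctan r₀ = 1) ∧
      (∃ r ∈ Icc (0 : ℝ) 1,
        ((1 - r ^ 2) / (1 + r ^ 2)) * b + (4 / Real.pi) * Real.arctan r > 1)) :=
  Ab_properties_general b hb1
end
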